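/- arXiv:1212.4542 — 3 statements merged into one kernel-verified Lean document; each statement's English description precedes it below -/
import Mathlib

section
/- Let M be a set with a distinguished element e and a binary operation d : M × M → M satisfying: d(a, e) = a for all a, d(a, a) = e for all a, and d(d(a, c), d(b, c)) = d(a, b) for all a, b, c. Then M is a group with identity e, inverse a⁻¹ = d(e, a), and multiplication a · b = d(a, d(e, b)). -/
/-- If a set M has an element e and a binary operation d satisfying
d(a,e) = a, d(a,a) = e and d(d(a,c), d(b,c)) = d(a,b), then M is a group with
identity e, inverse a⁻¹ = d(e,a), and multiplication a·b = d(a, d(e,b)). -/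
theorem bousfield_op_gives_group {M : Type*} (e : M) (d : M → M → M)
    (h1 : ∀ a, d a e = a) (h2 : ∀ a, d a a = e)
    (h3 : ∀ a b c, d (d a c) (d b c) = d a b) :
    ∃ G : Group M,
      G.one = e ∧
      (∀ a, G.inv a = d e a) ∧
      (∀ a b, G.mul a b = d a (d e b)) := by
  have L1 : ∀ b c, d e (d b c) = d c b := fun b c => by
    have h := h3 c b c; rwa [h2] at h
  have L2 : ∀ a, d e (d e a) = a := fun a => by rw [L1, h1]
  letI : One M := ⟨e⟩
  letI : Mul M := ⟨fun a b => d a (d e b)⟩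
  letI : Inv M := ⟨fun a => d e a⟩
  have hmul : ∀ a b : M, a * b = d a (d e b) := fun _ _ => rfl
  have L5 : ∀ (x c : M), (d x c) * c = x := fun x c => by
    rw [hmul]
    have h := h3 x e c
    rwa [h1] at h
  have assoc : ∀ a b c : M, a * b * c = a * (b * c) := by
    intro a b c
    have e1 : d (a * b * c) c = a * b := by
      rw [hmul (a * b) c]
      have h := h3 (a * b) e (d e c)
      rwa [L2, h1] at h
    have e2 : d (a * (b * c)) c = a * b := by
      rw [hmul a (b * c), hmul b c, L1, hmul a b]
      have hY : d (d e b) (d (d e c) b) = c := by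
        have h := h3 e (d e c) b
        rwa [L2] at h
      calc d (d a (d (d e c) b)) c
          = d (d a (d (d e c) b)) (d (d e b) (d (d e c) b)) := by rw [hY]
        _ = d a (d e b) := h3 a (d e b) (d (d e c) b)
    have key : d (a * b * c) c = d (a * (b * c)) c := by rw [e1, e2]
    calc a * b * c = (d (a * b * c) c) * c := (L5 _ _).symm
      _ = (d (a * (b * c)) c) * c := by rw [key]
      _ = a * (b * c) := L5 _ _
  have one_mul : ∀ a : M, 1 * a = a := fun a => L2 a
  have inv_mul : ∀ a : M, a⁻¹ * a = 1 := fun a => h2 (d e a)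
  exact ⟨Group.ofLeftAxioms assoc one_mul inv_mul, rfl, fun a => rfl, fun a b => rfl⟩
end

section
/- Let X : Γ^op → Set be a functor from the category of finite pointed sets to sets such that X(**0**) is a singleton and for every n ≥ 2 the Segal map X(**n**) → X(**1**)^n induced by the projections φ_{n,k} is a bijection (and for n = 1 the identity). Then X(**1**) carries a natural commutative monoid structure, with multiplication given by the image under X of the map **2** → **1** sending both 1 and 2 to 1, and unit given by the image of the unique point of X(**0**) under the map induced by **0** → **1**. -/
open CategoryTheory

/-- Objects of Γ^op: **n** = {0,1,...,n}, encoded by n. -/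
abbrev GammaOp := ℕ

/-- Morphisms of Γ^op: basepoint-preserving maps **m** → **n**. -/
def GHom (m n : ℕ) : Type := {f : Fin (m + 1) → Fin (n + 1) // f 0 = 0}

/-- The category Γ^op of finite pointed sets **n**. -/
instance : Category GammaOp where
  Hom m n := GHom m n
  id _ := ⟨id, rfl⟩
  comp f g := ⟨g.1 ∘ f.1, by simp [Function.comp, f.2, g.2]⟩
  id_comp _ := rfl
  comp_id _ := rfl
  assoc _ _ _ := rfl

/-- Regard a basepoint-preserving map as a morphism of the category Γ^op. -/
def toHom {m n : ℕ} (f : GHom m n) : (m : GammaOp) ⟶ (n : GammaOp) := f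

/-- φ_{n,k} : **n** → **1**, i ↦ 1 if i = k, else 0 (`phi k` is φ_{n,k+1} for `k : Fin n`). -/
def phi {n : ℕ} (k : Fin n) : GHom n 1 :=
  ⟨fun i => if i = k.succ then 1 else 0,
    by simp [(Fin.succ_ne_zero k).symm, Fin.ext_iff]⟩

/-- The fold map **2** → **1** sending both 1 and 2 to 1. -/
def fold : GHom 2 1 := ⟨fun i => if i = 0 then 0 else 1, rfl⟩

/-- The unique map **0** → **1**. -/
def zeroToOne : GHom 0 1 := ⟨fun _ => 0, rfl⟩


/-! For `s ∈ X(**m**)` and `f : **m** → **2**`, the product of the two Segal coordinates of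
`X(f) s` is `X(fold ∘ f) s`. Each monoid axiom thereby becomes an identity between composites of
explicit maps of finite pointed sets: the swap of **2** for commutativity, the two ways of folding
**3** onto **1** for associativity, and **1** → **2** with image `{0, 2}` for the unit, once one
knows that `X(**0**)` is a point. -/

namespace GammaSet

variable (X : GammaOp ⥤ Type)

def segal (n : ℕ) (x : X.obj n) : Fin n → X.obj 1 := fun k => X.map (toHom (phi k)) x

variable {X}

theorem map_map_of_comp_eq {l m n : ℕ} {f : GHom l m} {g : GHom m n} {h : GHom l n}
    (hfg : g.1 ∘ f.1 = h.1) (x : X.obj l) :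
    X.map (toHom g) (X.map (toHom f) x) = X.map (toHom h) x := by
  have hcomp : toHom f ≫ toHom g = toHom h := Subtype.ext hfg
  rw [← types_comp_apply (X.map (toHom f)) (X.map (toHom g)), ← X.map_comp, hcomp]

theorem map_eq_self_of_eq_id {n : ℕ} {f : GHom n n} (hf : f.1 = id) (x : X.obj n) :
    X.map (toHom f) x = x := by
  have hid : toHom f = 𝟙 (n : GammaOp) := Subtype.ext hf
  rw [hid, X.map_id, types_id_apply]

/-- Since **0** is a zero object of Γ^op, every `X(**n**)` retracts onto `X(**0**)` compatibly with
all maps; a pair of points of `X(**1**)` lying over different points of `X(**0**)` therefore has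
no preimage in `X(**2**)`. -/
theorem subsingleton_obj_zero (h2 : Function.Surjective (segal X 2)) :
    Subsingleton (X.obj 0) := by
  let toZero (n : ℕ) : GHom n 0 := ⟨fun _ => 0, rfl⟩
  have retract (x : X.obj 0) : X.map (toHom (toZero 1)) (X.map (toHom zeroToOne) x) = x :=
    (map_map_of_comp_eq (h := ⟨id, rfl⟩) (by decide) x).trans (map_eq_self_of_eq_id rfl x)
  refine ⟨fun x y => ?_⟩
  obtain ⟨s, hs⟩ := h2 ![X.map (toHom zeroToOne) x, X.map (toHom zeroToOne) y]
  calc x = X.map (toHom (toZero 1)) (X.map (toHom (phi 0)) s) := by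
        rw [← retract x]; exact congrArg _ (congrFun hs 0).symm
    _ = X.map (toHom (toZero 2)) s := map_map_of_comp_eq (by decide) s
    _ = X.map (toHom (toZero 1)) (X.map (toHom (phi 1)) s) :=
        (map_map_of_comp_eq (by decide) s).symm
    _ = y := by rw [← retract y]; exact congrArg _ (congrFun hs 1)

section Monoid

variable (h2 : Function.Bijective (segal X 2))

noncomputable def glue : (Fin 2 → X.obj 1) ≃ X.obj 2 := (Equiv.ofBijective _ h2).symm

noncomputable def mul (a b : X.obj 1) : X.obj 1 := X.map (toHom fold) (glue h2 ![a, b])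

theorem mul_map {m : ℕ} (f : GHom m 2) {g₀ g₁ g : GHom m 1}
    (h₀ : (phi (0 : Fin 2)).1 ∘ f.1 = g₀.1) (h₁ : (phi (1 : Fin 2)).1 ∘ f.1 = g₁.1)
    (h : fold.1 ∘ f.1 = g.1) (s : X.obj m) :
    mul h2 (X.map (toHom g₀) s) (X.map (toHom g₁) s) = X.map (toHom g) s := by
  have hglue : glue h2 ![X.map (toHom g₀) s, X.map (toHom g₁) s] = X.map (toHom f) s := by
    refine (glue h2).eq_symm_apply.mp (funext fun k => ?_)
    fin_cases k
    · exact (map_map_of_comp_eq h₀ s).symm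
    · exact (map_map_of_comp_eq h₁ s).symm
  rw [mul, hglue, map_map_of_comp_eq h s]

theorem mul_segal (s : X.obj 2) :
    mul h2 (X.map (toHom (phi 0)) s) (X.map (toHom (phi 1)) s) = X.map (toHom fold) s :=
  mul_map h2 ⟨id, rfl⟩ rfl rfl rfl s

theorem mul_comm (a b : X.obj 1) : mul h2 a b = mul h2 b a := by
  obtain ⟨s, hs⟩ := h2.2 ![a, b]
  obtain rfl : X.map (toHom (phi 0)) s = a := congrFun hs 0
  obtain rfl : X.map (toHom (phi 1)) s = b := congrFun hs 1
  exact (mul_segal h2 s).trans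
    (mul_map h2 ⟨![0, 2, 1], rfl⟩ (by decide) (by decide) (by decide) s).symm

theorem one_mul (pt : X.obj 0) (a : X.obj 1) : mul h2 (X.map (toHom zeroToOne) pt) a = a := by
  have := subsingleton_obj_zero h2.2
  have hunit : X.map (toHom zeroToOne) pt = X.map (toHom (⟨fun _ => 0, rfl⟩ : GHom 1 1)) a := by
    rw [← Subsingleton.elim (X.map (toHom (⟨fun _ => 0, rfl⟩ : GHom 1 0)) a) pt]
    exact map_map_of_comp_eq (by decide) a
  calc _ = mul h2 (X.map (toHom ⟨fun _ => 0, rfl⟩) a) (X.map (toHom ⟨id, rfl⟩) a) := by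
        rw [hunit, map_eq_self_of_eq_id (f := ⟨id, rfl⟩) rfl]
    _ = X.map (toHom ⟨id, rfl⟩) a :=
        mul_map h2 ⟨![0, 2], rfl⟩ (by decide) (by decide) (by decide) a
    _ = a := map_eq_self_of_eq_id rfl a

theorem mul_assoc (h3 : Function.Surjective (segal X 3)) (a b c : X.obj 1) :
    mul h2 (mul h2 a b) c = mul h2 a (mul h2 b c) := by
  obtain ⟨s, hs⟩ := h3 ![a, b, c]
  obtain rfl : X.map (toHom (phi 0)) s = a := congrFun hs 0
  obtain rfl : X.map (toHom (phi 1)) s = b := congrFun hs 1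
  obtain rfl : X.map (toHom (phi 2)) s = c := congrFun hs 2
  rw [mul_map h2 (g := ⟨![0, 1, 1, 0], rfl⟩) ⟨![0, 1, 2, 0], rfl⟩
      (by decide) (by decide) (by decide),
    mul_map h2 (g := ⟨![0, 0, 1, 1], rfl⟩) ⟨![0, 0, 1, 2], rfl⟩
      (by decide) (by decide) (by decide)]
  exact (mul_map h2 (g := ⟨![0, 1, 1, 1], rfl⟩) ⟨![0, 1, 1, 2], rfl⟩
      (by decide) (by decide) (by decide) s).trans
    (mul_map h2 ⟨![0, 1, 2, 2], rfl⟩ (by decide) (by decide) (by decide) s).symm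

end Monoid

noncomputable abbrev commMonoid (h2 : Function.Bijective (segal X 2))
    (h3 : Function.Surjective (segal X 3)) (pt : X.obj 0) : CommMonoid (X.obj 1) where
  mul := mul h2
  one := X.map (toHom zeroToOne) pt
  mul_assoc := mul_assoc h2 h3
  one_mul := one_mul h2 pt
  mul_one a := (mul_comm h2 a _).trans (one_mul h2 pt a)
  mul_comm := mul_comm h2

end GammaSet

theorem strict_gamma_set_comm_monoid_general (X : GammaOp ⥤ Type)
    (pt : X.obj 0)
    (hSegal : ∀ n : ℕ, 2 ≤ n →
      Function.Bijective (fun (x : X.obj n) (k : Fin n) => X.map (toHom (phi k)) x)) :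
    ∃ M : CommMonoid (X.obj 1),
      (∀ s : X.obj 2,
        M.mul (X.map (toHom (phi (0 : Fin 2))) s) (X.map (toHom (phi (1 : Fin 2))) s)
          = X.map (toHom fold) s) ∧
      M.one = X.map (toHom zeroToOne) pt := by
  have h2 := hSegal 2 le_rfl
  exact ⟨GammaSet.commMonoid h2 (hSegal 3 (by norm_num)).2 pt, GammaSet.mul_segal h2, rfl⟩

/-- If X : Γ^op → Set has X(**0**) a singleton and all Segal maps
X(**n**) → X(**1**)^n (n ≥ 2) bijective, then X(**1**) carries a natural
commutative monoid structure: multiplication is induced by the fold map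
**2** → **1**, and the unit is the image of the point of X(**0**) under the map
induced by **0** → **1**. -/
theorem strict_gamma_set_comm_monoid (X : GammaOp ⥤ Type)
    (h0 : Subsingleton (X.obj 0)) (pt : X.obj 0)
    (hSegal : ∀ n : ℕ, 2 ≤ n →
      Function.Bijective (fun (x : X.obj n) (k : Fin n) => X.map (toHom (phi k)) x)) :
    ∃ M : CommMonoid (X.obj 1),
      (∀ s : X.obj 2,
        M.mul (X.map (toHom (phi (0 : Fin 2))) s) (X.map (toHom (phi (1 : Fin 2))) s)
          = X.map (toHom fold) s) ∧
      M.one = X.map (toHom zeroToOne) pt :=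
  strict_gamma_set_comm_monoid_general X pt hSegal
end

section
/- Let X : Γ^op → Set be a functor with X(**0**) a singleton such that for every n ≥ 2 the Bousfield-Segal map X(**n**) → X(**1**)^n induced by the maps δ^{n,k} is a bijection. Then X(**1**) carries a natural abelian group structure. -/
open CategoryTheory

def beta {n : ℕ} (k : Fin n) : GHom n 1 :=
  ⟨fun i => if i ≠ 0 ∧ i ≤ k.succ then 1 else 0, by simp⟩

namespace BSaux

theorem ghom_eq {m n : ℕ} (f g : GHom m n) (h : ∀ i, f.1 i = g.1 i) : f = g :=
  Subtype.ext (funext h)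

theorem map_comp_eq (X : GammaOp ⥤ Type) {m n p : ℕ} (f : GHom m n) (g : GHom n p)
    (h : GHom m p) (hh : ∀ i, g.1 (f.1 i) = h.1 i) (x : X.obj m) :
    X.map (toHom g) (X.map (toHom f) x) = X.map (toHom h) x := by
  rw [← FunctorToTypes.map_comp_apply]
  have he : toHom f ≫ toHom g = toHom h := ghom_eq _ _ hh
  rw [he]

theorem map_id_eq (X : GammaOp ⥤ Type) {m : ℕ} (h : GHom m m) (hh : ∀ i, h.1 i = i)
    (x : X.obj m) : X.map (toHom h) x = x := by
  have he : toHom h = 𝟙 (m : GammaOp) := ghom_eq _ _ hh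
  rw [he, FunctorToTypes.map_id_apply]

def zer (m : ℕ) : GHom m 1 := ⟨fun _ => 0, rfl⟩

variable (X : GammaOp ⥤ Type)

def bone (pt : X.obj 0) : X.obj 1 := X.map (toHom (⟨fun _ => 0, rfl⟩ : GHom 0 1)) pt

theorem map_zero (h0 : Subsingleton (X.obj 0)) (pt : X.obj 0) {m : ℕ} (x : X.obj m) :
    X.map (toHom (zer m)) x = bone X pt := by
  have h1 : X.map (toHom (⟨fun _ => 0, rfl⟩ : GHom m 0)) x = pt := h0.elim _ _
  rw [← map_comp_eq X (⟨fun _ => 0, rfl⟩ : GHom m 0) (⟨fun _ => 0, rfl⟩ : GHom 0 1)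
    (zer m) (fun _ => rfl) x, h1]
  rfl

variable (hB : ∀ n : ℕ, 2 ≤ n →
  Function.Bijective (fun (x : X.obj n) (k : Fin n) => X.map (toHom (beta k)) x))

noncomputable def sig (a b : X.obj 1) : X.obj 2 :=
  (Equiv.ofBijective _ (hB 2 le_rfl)).symm ![a, b]

noncomputable def dd (a b : X.obj 1) : X.obj 1 :=
  X.map (toHom (phi (1 : Fin 2))) (sig X hB a b)

theorem sig_unique (y : X.obj 2) :
    sig X hB (X.map (toHom (beta (0 : Fin 2))) y) (X.map (toHom (beta (1 : Fin 2))) y) = y := by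
  unfold sig
  rw [Equiv.symm_apply_eq]
  funext k
  fin_cases k <;> rfl

theorem dd_spec (y : X.obj 2) :
    X.map (toHom (phi (1 : Fin 2))) y
      = dd X hB (X.map (toHom (beta (0 : Fin 2))) y) (X.map (toHom (beta (1 : Fin 2))) y) := by
  unfold dd
  rw [sig_unique]

theorem claim_gen {m : ℕ} (g : GHom m 2) (hz ho hq : GHom m 1)
    (e0 : ∀ i, (beta (0 : Fin 2)).1 (g.1 i) = hz.1 i)
    (e1 : ∀ i, (beta (1 : Fin 2)).1 (g.1 i) = ho.1 i)
    (eq : ∀ i, (phi (1 : Fin 2)).1 (g.1 i) = hq.1 i)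
    (x : X.obj m) :
    X.map (toHom hq) x = dd X hB (X.map (toHom hz) x) (X.map (toHom ho) x) := by
  rw [← map_comp_eq X g _ _ e0 x, ← map_comp_eq X g _ _ e1 x, ← map_comp_eq X g _ _ eq x]
  exact dd_spec X hB _

def gA : GHom 3 2 := ⟨![0,1,2,0], rfl⟩
def gB : GHom 3 2 := ⟨![0,1,1,2], rfl⟩
def gC : GHom 3 2 := ⟨![0,1,2,2], rfl⟩
def p12 : GHom 3 3 := ⟨![0,2,1,3], rfl⟩
def p23 : GHom 3 3 := ⟨![0,1,3,2], rfl⟩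
def p13 : GHom 3 3 := ⟨![0,3,2,1], rfl⟩
def s2 : GHom 3 1 := ⟨![0,0,1,0], rfl⟩
def s3 : GHom 3 1 := ⟨![0,0,0,1], rfl⟩
def s23 : GHom 3 1 := ⟨![0,0,1,1], rfl⟩
def s13 : GHom 3 1 := ⟨![0,1,0,1], rfl⟩
def i1 : GHom 1 2 := ⟨![0,1], rfl⟩
def i2 : GHom 1 2 := ⟨![0,2], rfl⟩
def id1 : GHom 1 1 := ⟨![0,1], rfl⟩

theorem claimA (x : X.obj 3) :
    X.map (toHom s2) x
      = dd X hB (X.map (toHom (beta (0 : Fin 3))) x) (X.map (toHom (beta (1 : Fin 3))) x) :=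
  claim_gen X hB gA (beta 0) (beta 1) s2 (by decide) (by decide) (by decide) x

theorem claimB (x : X.obj 3) :
    X.map (toHom s3) x
      = dd X hB (X.map (toHom (beta (1 : Fin 3))) x) (X.map (toHom (beta (2 : Fin 3))) x) :=
  claim_gen X hB gB (beta 1) (beta 2) s3 (by decide) (by decide) (by decide) x

theorem claimC (x : X.obj 3) :
    X.map (toHom s23) x
      = dd X hB (X.map (toHom (beta (0 : Fin 3))) x) (X.map (toHom (beta (2 : Fin 3))) x) :=
  claim_gen X hB gC (beta 0) (beta 2) s23 (by decide) (by decide) (by decide) x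

theorem claim13 (x : X.obj 3) :
    X.map (toHom s13) x
      = dd X hB (dd X hB (X.map (toHom (beta (0 : Fin 3))) x) (X.map (toHom (beta (1 : Fin 3))) x))
          (X.map (toHom (beta (2 : Fin 3))) x) := by
  have h := claimC X hB (X.map (toHom p12) x)
  rw [map_comp_eq X p12 s23 s13 (by decide) x,
      map_comp_eq X p12 (beta (0 : Fin 3)) s2 (by decide) x,
      map_comp_eq X p12 (beta (2 : Fin 3)) (beta (2 : Fin 3)) (by decide) x,
      claimA X hB x] at h
  exact h

theorem idI1x (x : X.obj 3) :
    X.map (toHom (beta (0 : Fin 3))) x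
      = dd X hB (dd X hB (X.map (toHom (beta (0 : Fin 3))) x) (X.map (toHom (beta (1 : Fin 3))) x))
          (X.map (toHom (beta (1 : Fin 3))) x) := by
  have h := claimA X hB (X.map (toHom p12) x)
  rw [map_comp_eq X p12 s2 (beta (0 : Fin 3)) (by decide) x,
      map_comp_eq X p12 (beta (0 : Fin 3)) s2 (by decide) x,
      map_comp_eq X p12 (beta (1 : Fin 3)) (beta (1 : Fin 3)) (by decide) x,
      claimA X hB x] at h
  exact h

theorem idKx (x : X.obj 3) :
    dd X hB (X.map (toHom (beta (1 : Fin 3))) x) (X.map (toHom (beta (2 : Fin 3))) x)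
      = dd X hB (X.map (toHom (beta (0 : Fin 3))) x)
          (dd X hB (dd X hB (X.map (toHom (beta (0 : Fin 3))) x) (X.map (toHom (beta (1 : Fin 3))) x))
            (X.map (toHom (beta (2 : Fin 3))) x)) := by
  have h := claimA X hB (X.map (toHom p23) x)
  rw [map_comp_eq X p23 s2 s3 (by decide) x,
      map_comp_eq X p23 (beta (0 : Fin 3)) (beta (0 : Fin 3)) (by decide) x,
      map_comp_eq X p23 (beta (1 : Fin 3)) s13 (by decide) x,
      claimB X hB x, claim13 X hB x] at h
  exact h

theorem idK2x (x : X.obj 3) :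
    dd X hB (X.map (toHom (beta (0 : Fin 3))) x) (X.map (toHom (beta (1 : Fin 3))) x)
      = dd X hB (dd X hB (X.map (toHom (beta (1 : Fin 3))) x) (X.map (toHom (beta (2 : Fin 3))) x))
          (dd X hB (X.map (toHom (beta (0 : Fin 3))) x) (X.map (toHom (beta (2 : Fin 3))) x)) := by
  have h := claimA X hB (X.map (toHom p13) x)
  rw [map_comp_eq X p13 s2 s2 (by decide) x,
      map_comp_eq X p13 (beta (0 : Fin 3)) s3 (by decide) x,
      map_comp_eq X p13 (beta (1 : Fin 3)) s23 (by decide) x,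
      claimA X hB x, claimB X hB x, claimC X hB x] at h
  exact h

include hB in
theorem surj3 (a b c : X.obj 1) :
    ∃ x : X.obj 3, X.map (toHom (beta (0 : Fin 3))) x = a
      ∧ X.map (toHom (beta (1 : Fin 3))) x = b
      ∧ X.map (toHom (beta (2 : Fin 3))) x = c := by
  obtain ⟨x, hx⟩ := (hB 3 (by norm_num)).2 ![a, b, c]
  refine ⟨x, ?_, ?_, ?_⟩
  · simpa using congrFun hx 0
  · simpa using congrFun hx 1
  · simpa using congrFun hx 2

theorem I1' (a b : X.obj 1) : dd X hB (dd X hB a b) b = a := by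
  obtain ⟨x, h1, h2, -⟩ := surj3 X hB a b b
  have h := idI1x X hB x
  rw [h1, h2] at h
  exact h.symm

theorem K' (a b c : X.obj 1) :
    dd X hB a (dd X hB (dd X hB a b) c) = dd X hB b c := by
  obtain ⟨x, h1, h2, h3⟩ := surj3 X hB a b c
  have h := idKx X hB x
  rw [h1, h2, h3] at h
  exact h.symm

theorem K2' (a b c : X.obj 1) :
    dd X hB (dd X hB b c) (dd X hB a c) = dd X hB a b := by
  obtain ⟨x, h1, h2, h3⟩ := surj3 X hB a b c
  have h := idK2x X hB x
  rw [h1, h2, h3] at h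
  exact h.symm

theorem I2' (h0 : Subsingleton (X.obj 0)) (pt : X.obj 0) (a : X.obj 1) :
    dd X hB (bone X pt) a = a := by
  have h := claim_gen X hB i2 (zer 1) id1 id1 (by decide) (by decide) (by decide) a
  rw [map_id_eq X id1 (by decide) a, map_zero X h0 pt a] at h
  exact h.symm

theorem I3' (h0 : Subsingleton (X.obj 0)) (pt : X.obj 0) (a : X.obj 1) :
    dd X hB a a = bone X pt := by
  have h := claim_gen X hB i1 id1 id1 (zer 1) (by decide) (by decide) (by decide) a
  rw [map_id_eq X id1 (by decide) a, map_zero X h0 pt a] at h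
  exact h.symm

section Alg
variable {A : Type} (d : A → A → A) (e : A)

theorem alg_l1 (hI2 : ∀ a, d e a = a) (hK : ∀ a b c, d a (d (d a b) c) = d b c) :
    ∀ a c, d a (d (d a e) c) = c := fun a c => by
  have h := hK a e c
  rwa [hI2] at h

theorem alg_l2 (hI1 : ∀ a b, d (d a b) b = a) (hI2 : ∀ a, d e a = a)
    (hK : ∀ a b c, d a (d (d a b) c) = d b c) :
    ∀ a b, d (d a e) (d a b) = b := fun a b => by
  have h := hK (d a e) e b
  rw [hI1 a e, hI2] at h
  exact h

theorem alg_e3 (hI2 : ∀ a, d e a = a) (hK : ∀ a b c, d a (d (d a b) c) = d b c) :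
    ∀ a b, d (d (d a e) b) e = d a (d b e) := fun a b => by
  have h1 := hK (d a e) b e
  have h2 := alg_l1 d e hI2 hK a (d (d (d a e) b) e)
  rw [h1] at h2
  exact h2.symm

theorem alg_assoc (hI1 : ∀ a b, d (d a b) b = a) (hI2 : ∀ a, d e a = a)
    (hK : ∀ a b c, d a (d (d a b) c) = d b c) :
    ∀ a b c, d (d (d (d a e) b) e) c = d (d a e) (d (d b e) c) := fun a b c => by
  have h := hK a (d b e) c
  rw [← alg_e3 d e hI2 hK a b] at h
  have h2 := alg_l2 d e hI1 hI2 hK a (d (d (d (d a e) b) e) c)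
  rw [h] at h2
  exact h2.symm

theorem alg_comm (hI1 : ∀ a b, d (d a b) b = a)
    (hK2 : ∀ a b c, d (d b c) (d a c) = d a b) :
    ∀ a b, d (d a e) b = d (d b e) a := fun a b => by
  have h := hK2 (d a e) b e
  rw [hI1 a e] at h
  exact h.symm

def mkCG (hI1 : ∀ a b, d (d a b) b = a)
    (hI2 : ∀ a, d e a = a)
    (hI3 : ∀ a, d a a = e)
    (hK : ∀ a b c, d a (d (d a b) c) = d b c)
    (hK2 : ∀ a b c, d (d b c) (d a c) = d a b) : CommGroup A where
  mul a b := d (d a e) b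
  one := e
  inv a := d a e
  mul_assoc := alg_assoc d e hI1 hI2 hK
  one_mul b := by show d (d e e) b = b; rw [hI3, hI2]
  mul_one a := by show d (d a e) e = a; exact hI1 a e
  inv_mul_cancel a := by show d (d (d a e) e) a = e; rw [hI1 a e, hI3]
  mul_comm := alg_comm d e hI1 hK2

end Alg

end BSaux

/-- If X : Γ^op → Set has X(**0**) a singleton and all Bousfield-Segal maps
X(**n**) → X(**1**)^n (n ≥ 2), induced by the δ^{n,k}, bijective, then X(**1**)
carries a natural abelian group structure (encoding (a,b) ↦ a b⁻¹: for s ∈ X(**2**)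
with Bousfield coordinates (a,b), one has b = a · (the φ_{2,2}-component of s)). -/
theorem bousfield_gamma_set_comm_group (X : GammaOp ⥤ Type)
    (h0 : Subsingleton (X.obj 0)) (pt : X.obj 0)
    (hB : ∀ n : ℕ, 2 ≤ n →
      Function.Bijective (fun (x : X.obj n) (k : Fin n) => X.map (toHom (beta k)) x)) :
    ∃ G : CommGroup (X.obj 1),
      ∀ s : X.obj 2,
        X.map (toHom (beta (1 : Fin 2))) s
          = G.mul (X.map (toHom (beta (0 : Fin 2))) s) (X.map (toHom (phi (1 : Fin 2))) s) := by
  refine ⟨BSaux.mkCG (BSaux.dd X hB) (BSaux.bone X pt)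
      (BSaux.I1' X hB) (BSaux.I2' X hB h0 pt) (BSaux.I3' X hB h0 pt)
      (BSaux.K' X hB) (BSaux.K2' X hB), fun s => ?_⟩
  show X.map (toHom (beta (1 : Fin 2))) s
      = BSaux.dd X hB
          (BSaux.dd X hB (X.map (toHom (beta (0 : Fin 2))) s) (BSaux.bone X pt))
          (X.map (toHom (phi (1 : Fin 2))) s)
  rw [BSaux.dd_spec X hB s]
  exact (BSaux.alg_l2 (BSaux.dd X hB) (BSaux.bone X pt)
    (BSaux.I1' X hB) (BSaux.I2' X hB h0 pt) (BSaux.K' X hB) _ _).symm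
end
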